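/- arXiv:1411.6272 — 2 statements merged into one kernel-verified Lean document; each statement's English description precedes it below -/
import Mathlib

section
/- There exists a numerical constant c > 0 such that for every positive integer L and every real t with 1/L ≤ |t| ≤ 1/2, the function U(t) = ∑_{p=-N}^{N} min(1, 1/p⁴) · min(4, 2/|p - Lt|) (with the convention min(1,1/0⁴)=1 at p=0, and L = 2N+1) satisfies U(t) ≤ c/(L|t|), where we assume Lt ∈ {-N,...,N} is a nonzero integer. -/
/-!
Each summand is at most `(64 / |j|) (1 + p²)⁻¹`. If `|p - j| ≥ |j| / 2` the kernel factor is at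
most `4 / |j|`; otherwise `|p| ≥ |j| / 2`, and the decay factor `min(1, p⁻⁴) ≤ 4 (1 + p²)⁻²`
supplies the `4 / |j|` through one of its two powers of `(1 + p²)⁻¹`. Summing against the weight
`(1 + p²)⁻¹`, which is summable over `ℤ`, gives `c = 64 ∑' p, (1 + p²)⁻¹`.
-/

theorem summable_inv_one_add_sq_int : Summable fun p : ℤ => (1 + (p : ℝ) ^ 2)⁻¹ := by
  refine (Real.summable_one_div_int_pow.mpr one_lt_two).of_norm_bounded_eventually ?_
  filter_upwards [Set.Finite.compl_mem_cofinite (Set.finite_singleton (0 : ℤ))] with p hp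
  have hp : (p : ℝ) ≠ 0 := by exact_mod_cast hp
  rw [Real.norm_of_nonneg (by positivity), one_div]
  exact inv_anti₀ (by positivity) (by linarith)

namespace LatticeSum

noncomputable def decay (p : ℤ) : ℝ := if p = 0 then 1 else min 1 (1 / (p : ℝ) ^ 4)

noncomputable def kernel (p j : ℤ) : ℝ := if p = j then 4 else min 4 (2 / |(p : ℝ) - (j : ℝ)|)

theorem decay_le (p : ℤ) : decay p ≤ 4 * (1 + (p : ℝ) ^ 2)⁻¹ ^ 2 := by
  unfold decay
  split_ifs with hp
  · simp [hp]
  · have hp1 : (1 : ℝ) ≤ (p : ℝ) ^ 2 := by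
      rw [← sq_abs, ← Int.cast_abs]; exact one_le_pow₀ (by exact_mod_cast Int.one_le_abs hp)
    calc min 1 (1 / (p : ℝ) ^ 4) ≤ 1 / (p : ℝ) ^ 4 := min_le_right _ _
      _ ≤ 4 / (1 + (p : ℝ) ^ 2) ^ 2 := by
        rw [div_le_div_iff₀ (by positivity) (by positivity)]; nlinarith
      _ = _ := by rw [inv_pow, div_eq_mul_inv]

theorem kernel_le_four (p j : ℤ) : kernel p j ≤ 4 := by
  unfold kernel; split_ifs
  · rfl
  · exact min_le_left _ _

theorem kernel_nonneg (p j : ℤ) : 0 ≤ kernel p j := by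
  unfold kernel; split_ifs
  · norm_num
  · exact le_min (by norm_num) (by positivity)

theorem kernel_le_or_inv_one_add_sq_le {j : ℤ} (hj : j ≠ 0) (p : ℤ) :
    kernel p j ≤ 4 / |(j : ℝ)| ∨ (1 + (p : ℝ) ^ 2)⁻¹ ≤ 4 / |(j : ℝ)| := by
  have hj1 : (1 : ℝ) ≤ |(j : ℝ)| := by rw [← Int.cast_abs]; exact_mod_cast Int.one_le_abs hj
  rcases le_or_gt |(j : ℝ)| (2 * |(p : ℝ) - j|) with hfar | hnear
  · left
    have hd : 0 < |(p : ℝ) - j| := by linarith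
    have hpj : p ≠ j := by rintro rfl; simp at hd
    unfold kernel
    rw [if_neg hpj]
    refine (min_le_right _ _).trans ?_
    rw [div_le_div_iff₀ hd (by linarith)]
    linarith
  · right
    have hp : |(j : ℝ)| ≤ 2 * |(p : ℝ)| := by
      linarith [abs_sub_abs_le_abs_sub (j : ℝ) p, abs_sub_comm (j : ℝ) p]
    rw [inv_le_comm₀ (by positivity) (by positivity), inv_div, div_le_iff₀ (by norm_num)]
    nlinarith [abs_nonneg (p : ℝ), sq_abs (p : ℝ)]

theorem decay_mul_kernel_le {j : ℤ} (hj : j ≠ 0) (p : ℤ) :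
    decay p * kernel p j ≤ 64 / |(j : ℝ)| * (1 + (p : ℝ) ^ 2)⁻¹ := by
  set w := (1 + (p : ℝ) ^ 2)⁻¹
  have hw0 : 0 ≤ w := by positivity
  have hw1 : w ≤ 1 := inv_le_one_of_one_le₀ (by nlinarith)
  have hk0 := kernel_nonneg p j
  have hk4 := kernel_le_four p j
  have hq : 0 < 4 / |(j : ℝ)| := by
    have : (j : ℝ) ≠ 0 := by exact_mod_cast hj
    positivity
  have hdk : decay p * kernel p j ≤ 4 * w ^ 2 * kernel p j :=
    mul_le_mul_of_nonneg_right (decay_le p) hk0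
  rw [show 64 / |(j : ℝ)| * w = 16 * (4 / |(j : ℝ)|) * w by ring]
  rcases kernel_le_or_inv_one_add_sq_le hj p with hk | hw
  · nlinarith [mul_le_mul hk (pow_le_of_le_one hw0 hw1 two_ne_zero) (sq_nonneg w) hq.le]
  · nlinarith [mul_le_mul hk4 hw hw0 (by norm_num : (0 : ℝ) ≤ 4)]

end LatticeSum

theorem stmt_8 :
    ∃ c : ℝ, 0 < c ∧ ∀ (N : ℕ), 1 ≤ N → ∀ j : ℤ, j ≠ 0 → |j| ≤ (N : ℤ) →
      ∑ p ∈ Finset.Icc (-(N : ℤ)) (N : ℤ),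
          (if p = 0 then (1 : ℝ) else min 1 (1 / (p : ℝ) ^ 4)) *
            (if p = j then (4 : ℝ) else min 4 (2 / |(p : ℝ) - (j : ℝ)|))
        ≤ c / |(j : ℝ)| := by
  refine ⟨64 * ∑' p : ℤ, (1 + (p : ℝ) ^ 2)⁻¹, mul_pos (by norm_num)
    (summable_inv_one_add_sq_int.tsum_pos (fun _ ↦ by positivity) 0 (by norm_num)), ?_⟩
  intro N _ j hj _
  calc _ ≤ ∑ p ∈ Finset.Icc (-(N : ℤ)) N, 64 / |(j : ℝ)| * (1 + (p : ℝ) ^ 2)⁻¹ :=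
        Finset.sum_le_sum fun p _ ↦ LatticeSum.decay_mul_kernel_le hj p
    _ = 64 / |(j : ℝ)| * ∑ p ∈ Finset.Icc (-(N : ℤ)) N, (1 + (p : ℝ) ^ 2)⁻¹ :=
        (Finset.mul_sum ..).symm
    _ ≤ 64 / |(j : ℝ)| * ∑' p : ℤ, (1 + (p : ℝ) ^ 2)⁻¹ := by
        gcongr
        exact summable_inv_one_add_sq_int.sum_le_tsum _ fun _ _ ↦ by positivity
    _ = _ := by ring
end

section
/- (Dual certificate implies ℓ₁ uniqueness.) Let R be an L×M complex matrix, s ∈ ℂ^M with support T ⊆ {1,...,M}, and y = Rs. Suppose the columns of R indexed by T are linearly independent, and there exists a vector v in the row space of R (i.e., v = Rᴴq for some q ∈ ℂ^L) such that v_j = sign(s_j) for all j ∈ T and |v_j| < 1 for all j ∉ T, where sign(z) = z/|z| for z ≠ 0. Then s is the unique solution of: minimize ‖s̃‖₁ subject to Rs̃ = y. -/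
/-!
Put `v = Rᴴ q`. Then `‖v j‖ ≤ 1` for all `j` and `re ⟪v, s⟫ = ‖s‖₁`, while
`⟪v, s'⟫ = ⟪q, R s'⟫ = ⟪q, R s⟫ = ⟪v, s⟫`; hence `‖s‖₁ = re ⟪v, s'⟫ ≤ ‖s'‖₁`, strictly as soon as
`s'` has a nonzero entry off the support `T` of `s`, where `‖v j‖ < 1`. If `s'` vanishes off `T`,
then `s' - s` is a kernel vector of `R` supported on `T`, so it is zero by the linear independence
of the columns indexed by `T`.
-/

open Matrix ComplexConjugate RCLike

namespace RCLike

variable {𝕜 : Type*} [RCLike 𝕜]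

theorem re_conj_mul_le_norm {w : 𝕜} (hw : ‖w‖ ≤ 1) (z : 𝕜) : re (conj w * z) ≤ ‖z‖ :=
  calc re (conj w * z) ≤ ‖conj w * z‖ := re_le_norm _
    _ = ‖w‖ * ‖z‖ := by rw [norm_mul, norm_conj]
    _ ≤ ‖z‖ := mul_le_of_le_one_left (norm_nonneg z) hw

theorem re_conj_mul_lt_norm {w z : 𝕜} (hw : ‖w‖ < 1) (hz : z ≠ 0) : re (conj w * z) < ‖z‖ :=
  calc re (conj w * z) ≤ ‖conj w * z‖ := re_le_norm _
    _ = ‖w‖ * ‖z‖ := by rw [norm_mul, norm_conj]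
    _ < ‖z‖ := mul_lt_of_lt_one_left (norm_pos_iff.mpr hz) hw

theorem norm_div_norm_le_one (z : 𝕜) : ‖z / ‖z‖‖ ≤ 1 := by
  rw [norm_div, norm_ofReal, abs_norm]
  exact div_self_le_one _

theorem conj_div_norm_mul_self (z : 𝕜) : conj (z / ‖z‖) * z = ‖z‖ := by
  rcases eq_or_ne z 0 with rfl | hz
  · simp
  have : (‖z‖ : 𝕜) ≠ 0 := ofReal_ne_zero.mpr (norm_ne_zero_iff.mpr hz)
  rw [map_div₀, conj_ofReal, div_mul_eq_mul_div, conj_mul, sq, mul_div_cancel_right₀ _ this]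

variable {n : Type*} [Fintype n]

theorem re_star_dotProduct_eq_sum_norm {v x : n → 𝕜} (hv : ∀ j, x j ≠ 0 → v j = x j / ‖x j‖) :
    re (star v ⬝ᵥ x) = ∑ j, ‖x j‖ := by
  have hj (j : n) : conj (v j) * x j = ‖x j‖ := by
    rcases eq_or_ne (x j) 0 with hx | hx
    · simp [hx]
    · rw [hv j hx, conj_div_norm_mul_self]
  simp only [dotProduct, Pi.star_apply, star_def, hj, map_sum, ofReal_re]

theorem re_star_dotProduct_lt_sum_norm {v x : n → 𝕜} (hv : ∀ j, ‖v j‖ ≤ 1) {j₀ : n}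
    (hvj₀ : ‖v j₀‖ < 1) (hxj₀ : x j₀ ≠ 0) : re (star v ⬝ᵥ x) < ∑ j, ‖x j‖ := by
  simp only [dotProduct, Pi.star_apply, star_def, map_sum]
  exact Finset.sum_lt_sum (fun j _ => re_conj_mul_le_norm (hv j) _)
    ⟨j₀, Finset.mem_univ _, re_conj_mul_lt_norm hvj₀ hxj₀⟩

end RCLike

namespace Matrix

variable {m n : Type*} [Fintype n]

theorem star_conjTranspose_mulVec_dotProduct [Fintype m] {α : Type*} [CommRing α] [StarRing α]
    (R : Matrix m n α) (q : m → α) (x : n → α) :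
    star (Rᴴ *ᵥ q) ⬝ᵥ x = star q ⬝ᵥ (R *ᵥ x) := by
  rw [star_mulVec, conjTranspose_conjTranspose, dotProduct_mulVec]

theorem eq_zero_of_mulVec_eq_zero_of_linearIndepOn {α : Type*} [CommRing α]
    {R : Matrix m n α} {S : Set n} (hS : LinearIndepOn α Rᵀ S) {x : n → α}
    (hxS : ∀ j ∉ S, x j = 0) (hRx : R *ᵥ x = 0) : x = 0 := by
  classical
  have hsum : ∑ j : S, x j • Rᵀ j = 0 := by
    have hout : ∑ j : {j // j ∉ S}, x j • Rᵀ j = 0 :=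
      Finset.sum_eq_zero fun j _ => by rw [hxS j j.2, zero_smul]
    rw [← hRx, ← add_zero (∑ j : S, _), ← hout]
    refine (Fintype.sum_subtype_add_sum_subtype (· ∈ S) fun j => x j • Rᵀ j).trans ?_
    ext i
    simp only [Finset.sum_apply, Pi.smul_apply, transpose_apply, smul_eq_mul, mulVec, dotProduct,
      mul_comm]
  funext j
  by_cases hj : j ∈ S
  · exact Fintype.linearIndependent_iff.mp hS (fun j => x j) hsum ⟨j, hj⟩
  · exact hxS j hj

end Matrix

theorem stmt_11 (L M : ℕ) (R : Matrix (Fin L) (Fin M) ℂ) (s : Fin M → ℂ)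
    (hli : LinearIndependent ℂ (fun j : {j : Fin M // s j ≠ 0} => fun i => R i j.1))
    (q : Fin L → ℂ)
    (hsign : ∀ j, s j ≠ 0 → (R.conjTranspose.mulVec q) j = s j / (‖s j‖ : ℂ))
    (hbound : ∀ j, s j = 0 → ‖(R.conjTranspose.mulVec q) j‖ < 1) :
    ∀ s' : Fin M → ℂ, R.mulVec s' = R.mulVec s → s' ≠ s →
      ∑ j, ‖s j‖ < ∑ j, ‖s' j‖ := by
  intro s' hR hne
  set v := Rᴴ *ᵥ q
  have hv (j : Fin M) : ‖v j‖ ≤ 1 := by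
    by_cases hj : s j = 0
    · exact (hbound j hj).le
    · rw [hsign j hj]
      exact norm_div_norm_le_one (s j)
  have hT : LinearIndepOn ℂ Rᵀ {j | s j ≠ 0} := hli
  obtain ⟨j₀, hsj₀, hs'j₀⟩ : ∃ j, s j = 0 ∧ s' j ≠ 0 := by
    by_contra! hsupp
    refine hne (sub_eq_zero.mp (eq_zero_of_mulVec_eq_zero_of_linearIndepOn hT ?_ ?_))
    · intro j hj
      have hsj : s j = 0 := not_not.mp hj
      rw [Pi.sub_apply, hsupp j hsj, hsj, sub_self]
    · rw [mulVec_sub, hR, sub_self]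
  calc ∑ j, ‖s j‖ = re (star v ⬝ᵥ s) := (re_star_dotProduct_eq_sum_norm hsign).symm
    _ = re (star v ⬝ᵥ s') := by
      rw [star_conjTranspose_mulVec_dotProduct, star_conjTranspose_mulVec_dotProduct, hR]
    _ < ∑ j, ‖s' j‖ := re_star_dotProduct_lt_sum_norm hv (hbound j₀ hsj₀) hs'j₀
end
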